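/- In Aut(F_n), for distinct indices p, q, k one has the identity ρ_{pk} K_{kpq} ρ_{pk}^{−1} = K_{qk} K_{qp} K_{pq} K_{pqk} K_{kp} K_{kpq} K_{kq}^{−1} K_{kp}^{−1} K_{qp}^{−1} K_{qk}^{−1}. -/

import Mathlib

namespace FoldDecomp

open FreeGroup

variable {n : ℕ}

/-- Build an automorphism of the free group from images of generators plus an inverse system. -/
def mkAut (f g : Fin n → FreeGroup (Fin n))
    (h1 : ∀ k, FreeGroup.lift g (f k) = FreeGroup.of k)
    (h2 : ∀ k, FreeGroup.lift f (g k) = FreeGroup.of k) :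
    MulAut (FreeGroup (Fin n)) where
  toFun := FreeGroup.lift f
  invFun := FreeGroup.lift g
  left_inv := fun x => by
    have h : (FreeGroup.lift g).comp (FreeGroup.lift f) = MonoidHom.id _ :=
      FreeGroup.ext_hom _ _ (by simp [h1])
    simpa using DFunLike.congr_fun h x
  right_inv := fun x => by
    have h : (FreeGroup.lift f).comp (FreeGroup.lift g) = MonoidHom.id _ :=
      FreeGroup.ext_hom _ _ (by simp [h2])
    simpa using DFunLike.congr_fun h x
  map_mul' := map_mul _

/-- The right Nielsen automorphism `ρ i j`, sending `xᵢ ↦ xᵢxⱼ` and fixing the other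
generators. -/
def rho (i j : Fin n) (hij : i ≠ j) : MulAut (FreeGroup (Fin n)) :=
  mkAut (fun k => if k = i then of i * of j else of k)
    (fun k => if k = i then of i * (of j)⁻¹ else of k)
    (by
      intro k
      by_cases hk : k = i
      · subst hk
        simp [if_neg (Ne.symm hij)]
      · simp [hk])
    (by
      intro k
      by_cases hk : k = i
      · subst hk
        simp [if_neg (Ne.symm hij)]
      · simp [hk])

/-- The partial conjugation `K i j`, sending `xᵢ ↦ xⱼxᵢxⱼ⁻¹` and fixing the other generators. -/
def Kc (i j : Fin n) (hij : i ≠ j) : MulAut (FreeGroup (Fin n)) :=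
  mkAut (fun k => if k = i then of j * of i * (of j)⁻¹ else of k)
    (fun k => if k = i then (of j)⁻¹ * of i * of j else of k)
    (by
      intro k
      by_cases hk : k = i
      · subst hk
        simp [if_neg (Ne.symm hij)]
        group
      · simp [hk])
    (by
      intro k
      by_cases hk : k = i
      · subst hk
        simp [if_neg (Ne.symm hij)]
        group
      · simp [hk])

/-- The inversion `S i`, sending `xᵢ ↦ xᵢ⁻¹` and fixing the other generators. -/
def Sinv (i : Fin n) : MulAut (FreeGroup (Fin n)) :=
  mkAut (fun k => if k = i then (of i)⁻¹ else of k)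
    (fun k => if k = i then (of i)⁻¹ else of k)
    (by
      intro k
      by_cases hk : k = i
      · subst hk; simp
      · simp [hk])
    (by
      intro k
      by_cases hk : k = i
      · subst hk; simp
      · simp [hk])

/-- The automorphism `K i j k`, sending `xᵢ ↦ xᵢ[xⱼ,xₖ]` and fixing the other generators,
where `[a,b] = a * b * a⁻¹ * b⁻¹`. -/
def Kcom (i j k : Fin n) (hji : j ≠ i) (hki : k ≠ i) : MulAut (FreeGroup (Fin n)) :=
  mkAut (fun l => if l = i then of i * (of j * of k * (of j)⁻¹ * (of k)⁻¹) else of l)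
    (fun l => if l = i then of i * (of k * of j * (of k)⁻¹ * (of j)⁻¹) else of l)
    (by
      intro l
      by_cases hl : l = i
      · subst hl
        simp [if_neg hji, if_neg hki]
        group
      · simp [hl])
    (by
      intro l
      by_cases hl : l = i
      · subst hl
        simp [if_neg hji, if_neg hki]
        group
      · simp [hl])

/- Both sides are automorphisms of a free group, so it suffices to compare them on the basis.
Every factor fixes the generators outside `{x_p, x_q, x_k}`; on `x_p`, `x_q` and `x_k` the two
images are explicit words which agree after free reduction. -/

@[simp]
lemma mkAut_apply (f g : Fin n → FreeGroup (Fin n)) (h1 h2) (x : FreeGroup (Fin n)) :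
    mkAut f g h1 h2 x = FreeGroup.lift f x :=
  rfl

@[simp]
lemma mkAut_symm_apply (f g : Fin n → FreeGroup (Fin n)) (h1 h2) (x : FreeGroup (Fin n)) :
    (mkAut f g h1 h2).symm x = FreeGroup.lift g x :=
  rfl

@[ext]
lemma mulAut_ext {φ ψ : MulAut (FreeGroup (Fin n))} (h : ∀ i, φ (of i) = ψ (of i)) : φ = ψ :=
  MulEquiv.toMonoidHom_injective (FreeGroup.ext_hom _ _ h)

/-- The identity
`ρ_{pk} K_{kpq} ρ_{pk}⁻¹ = K_{qk} K_{qp} K_{pq} K_{pqk} K_{kp} K_{kpq} K_{kq}⁻¹ K_{kp}⁻¹ K_{qp}⁻¹ K_{qk}⁻¹`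
in `Aut(F_n)`, for distinct indices `p, q, k`. -/
theorem rho_Kcom_conj (n : ℕ) (p q k : Fin n) (hpq : p ≠ q) (hpk : p ≠ k) (hqk : q ≠ k) :
    rho p k hpk * Kcom k p q hpk hqk * (rho p k hpk)⁻¹ =
      Kc q k hqk * Kc q p (Ne.symm hpq) * Kc p q hpq *
        Kcom p q k (Ne.symm hpq) (Ne.symm hpk) * Kc k p (Ne.symm hpk) *
        Kcom k p q hpk hqk * (Kc k q (Ne.symm hqk))⁻¹ *
        (Kc k p (Ne.symm hpk))⁻¹ * (Kc q p (Ne.symm hpq))⁻¹ * (Kc q k hqk)⁻¹ := by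
  ext l
  obtain rfl | hlp := eq_or_ne l p
  · simp [rho, Kc, Kcom, MulAut.mul_apply, hpq, hpk, hpq.symm, hpk.symm, hqk.symm]
    group
  obtain rfl | hlq := eq_or_ne l q
  · simp [rho, Kc, Kcom, MulAut.mul_apply, hpq, hpk, hqk, hpq.symm, hpk.symm, hqk.symm]
    group
  obtain rfl | hlk := eq_or_ne l k
  · simp [rho, Kc, Kcom, MulAut.mul_apply, hpq, hpk, hqk, hpq.symm, hpk.symm, hqk.symm]
    group
  simp [rho, Kc, Kcom, MulAut.mul_apply, hlp, hlq, hlk]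

end FoldDecomp
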